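/- arXiv:1501.02461 — 3 statements merged into one kernel-verified Lean document; each statement's English description precedes it below -/
import Mathlib

section
/- Let ρ^↑, ρ^↓ : ℝ³ → (0,∞) with √(ρ^↑), √(ρ^↓) ∈ C¹(ℝ³), and let τ^↑, τ^↓ ∈ C¹(ℝ³,ℝ). Define the orbital components φ^α := √(ρ^α) e^{iτ^α} for α ∈ {↑,↓}, the off-diagonal spin density σ := φ^↑ conj(φ^↓) = √(ρ^↑ρ^↓) e^{i(τ^↑ − τ^↓)}, the total density ρ := ρ^↑ + ρ^↓, and the paramagnetic current j := Im( conj(φ^↑) ∇φ^↑ + conj(φ^↓) ∇φ^↓ ) = ρ^↑ ∇τ^↑ + ρ^↓ ∇τ^↓. Then j/ρ − Im(conj(σ) ∇σ)/(ρ ρ^↓) = ∇τ^↓ and j/ρ + Im(conj(σ) ∇σ)/(ρ ρ^↑) = ∇τ^↑ pointwise on ℝ³. In particular, if moreover τ^↑, τ^↓ ∈ C²(ℝ³,ℝ), both vector fields j/ρ − Im(conj(σ)∇σ)/(ρρ^↓) and j/ρ + Im(conj(σ)∇σ)/(ρρ^↑) are curl-free. -/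
open MeasureTheory Complex Finset
open scoped ENNReal ComplexConjugate ComplexOrder

noncomputable section

abbrev R3 : Type := EuclideanSpace ℝ (Fin 3)

/-- A real-valued test function on `ℝ³`: smooth with compact support. -/
def IsTestFun (φ : R3 → ℝ) : Prop :=
  ContDiff ℝ (⊤ : ℕ∞) φ ∧ HasCompactSupport φ

/-- `G` is a weak gradient of the complex-valued function `f` on `ℝ³`. -/
def HasWeakGrad (f : R3 → ℂ) (G : R3 → Fin 3 → ℂ) : Prop :=
  ∀ (i : Fin 3) (φ : R3 → ℝ), IsTestFun φ →
    (∫ x, f x * (fderiv ℝ φ x (EuclideanSpace.single i 1) : ℂ)) =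
      - ∫ x, G x i * (φ x : ℂ)

/-- Membership in the Sobolev space `W^{1,p}(ℝ³, ℂ)`. -/
def MemSobolev (p : ℝ≥0∞) (f : R3 → ℂ) : Prop :=
  MemLp f p volume ∧
    ∃ G : R3 → Fin 3 → ℂ, HasWeakGrad f G ∧ MemLp G p volume

/-- Membership in `H¹(ℝ³, ℂ) = W^{1,2}(ℝ³, ℂ)`. -/
def MemH1 (f : R3 → ℂ) : Prop := MemSobolev 2 f

/-- The set `C_N` of spin-density 2×2 matrices. -/
def MemCN (N : ℕ) (R : R3 → Matrix (Fin 2) (Fin 2) ℂ) : Prop :=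
  (∀ i j : Fin 2, Integrable (fun x => R x i j) volume) ∧
  (∀ᵐ x ∂(volume : Measure R3), (R x).PosSemidef) ∧
  (∫ x, (R x).trace) = (N : ℂ) ∧
  ∃ S : R3 → Matrix (Fin 2) (Fin 2) ℂ,
    (∀ᵐ x ∂(volume : Measure R3), (S x).PosSemidef ∧ S x * S x = R x) ∧
    ∀ i j : Fin 2, MemH1 (fun x => S x i j)

/-- The set `C_N⁰` of null-determinant spin-density matrices. -/
def MemCN0 (N : ℕ) (R : R3 → Matrix (Fin 2) (Fin 2) ℂ) : Prop :=
  MemCN N R ∧ ∀ᵐ x ∂(volume : Measure R3), (R x).det = 0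

/-- Membership in `H¹(ℝ³, ℂ²)`. -/
def MemH1C2 (Φ : R3 → Fin 2 → ℂ) : Prop := ∀ s : Fin 2, MemH1 (fun x => Φ x s)

/-- `R` is Slater-representable with `N` orbitals. -/
def SlaterRep (N : ℕ) (R : R3 → Matrix (Fin 2) (Fin 2) ℂ) : Prop :=
  ∃ Φ : Fin N → R3 → Fin 2 → ℂ,
    (∀ k, MemH1C2 (Φ k)) ∧
    (∀ k l, (∫ x, ∑ s : Fin 2, conj (Φ k x s) * Φ l x s) = if k = l then (1 : ℂ) else 0) ∧
    (∀ᵐ x ∂(volume : Measure R3),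
      R x = Matrix.of fun a b => ∑ k, Φ k x a * conj (Φ k x b))

/-- Partial derivative of a real-valued function on `ℝ³` in direction `i`. -/
def pderiv3 (i : Fin 3) (f : R3 → ℝ) (x : R3) : ℝ :=
  fderiv ℝ f x (EuclideanSpace.single i 1)

/-- Partial derivative of a complex-valued function on `ℝ³` in direction `i`. -/
def cderiv3 (i : Fin 3) (f : R3 → ℂ) (x : R3) : ℂ :=
  fderiv ℝ f x (EuclideanSpace.single i 1)

/-- Curl of a vector field on `ℝ³`:
`curl v = (∂₂v₃ − ∂₃v₂, ∂₃v₁ − ∂₁v₃, ∂₁v₂ − ∂₂v₁)`. -/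
def curl3 (v : R3 → Fin 3 → ℝ) (x : R3) : Fin 3 → ℝ :=
  ![pderiv3 1 (fun y => v y 2) x - pderiv3 2 (fun y => v y 1) x,
    pderiv3 2 (fun y => v y 0) x - pderiv3 0 (fun y => v y 2) x,
    pderiv3 0 (fun y => v y 1) x - pderiv3 1 (fun y => v y 0) x]


lemma exp_conj_mul (t : ℝ) :
    conj (Complex.exp (Complex.I * t)) * Complex.exp (Complex.I * t) = 1 := by
  rw [← Complex.exp_conj, ← Complex.exp_add]
  simp [map_mul, Complex.conj_I, Complex.conj_ofReal]

lemma cderiv_polar (s τ : R3 → ℝ) (hs : ContDiff ℝ 1 s) (hτ : ContDiff ℝ 1 τ)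
    (x : R3) (i : Fin 3) :
    cderiv3 i (fun y => (s y : ℂ) * Complex.exp (Complex.I * (τ y : ℂ))) x
      = ((pderiv3 i s x : ℂ) + (s x : ℂ) * Complex.I * (pderiv3 i τ x : ℂ))
          * Complex.exp (Complex.I * (τ x : ℂ)) := by
  have hsd : HasFDerivAt (fun y => ((s y : ℝ) : ℂ))
      (Complex.ofRealCLM.comp (fderiv ℝ s x)) x :=
    Complex.ofRealCLM.hasFDerivAt.comp x ((hs.differentiable one_ne_zero x).hasFDerivAt)
  have hτd : HasFDerivAt (fun y => ((τ y : ℝ) : ℂ))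
      (Complex.ofRealCLM.comp (fderiv ℝ τ x)) x :=
    Complex.ofRealCLM.hasFDerivAt.comp x ((hτ.differentiable one_ne_zero x).hasFDerivAt)
  have hinner : HasFDerivAt (fun y => Complex.I * (τ y : ℂ))
      (Complex.I • (Complex.ofRealCLM.comp (fderiv ℝ τ x))) x := hτd.const_mul _
  have hexp := hinner.cexp
  have hmul := hsd.mul hexp
  have h : fderiv ℝ (fun y => (s y : ℂ) * Complex.exp (Complex.I * (τ y : ℂ))) x = _ :=
    hmul.fderiv
  simp only [cderiv3, h]
  simp [pderiv3]
  ring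

lemma im_conj_mul (s a b t : ℝ) :
    (conj ((s : ℂ) * Complex.exp (Complex.I * t)) *
      (((a : ℂ) + (s : ℂ) * Complex.I * (b : ℂ)) * Complex.exp (Complex.I * t))).im
      = s ^ 2 * b := by
  have h : conj ((s : ℂ) * Complex.exp (Complex.I * t)) *
      (((a : ℂ) + (s : ℂ) * Complex.I * (b : ℂ)) * Complex.exp (Complex.I * t))
      = (s : ℂ) * ((a : ℂ) + (s : ℂ) * Complex.I * (b : ℂ)) *
        (conj (Complex.exp (Complex.I * t)) * Complex.exp (Complex.I * t)) := by
    rw [map_mul, Complex.conj_ofReal]; ring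
  rw [h, exp_conj_mul, mul_one]
  simp [Complex.mul_im, Complex.add_im, Complex.mul_re]
  ring

lemma curl_grad (τ : R3 → ℝ) (hτ : ContDiff ℝ 2 τ) (x : R3) :
    curl3 (fun y i => pderiv3 i τ y) x = 0 := by
  have hderiv : ∀ y, HasFDerivAt τ (fderiv ℝ τ y) y := fun y =>
    ((hτ.differentiable (by norm_num)) y).hasFDerivAt
  have hf' : Differentiable ℝ (fderiv ℝ τ) :=
    (hτ.fderiv_right (m := 1) one_add_one_eq_two.le).differentiable one_ne_zero
  have key : ∀ (k l : Fin 3), pderiv3 k (fun y => pderiv3 l τ y) x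
      = fderiv ℝ (fderiv ℝ τ) x (EuclideanSpace.single k 1) (EuclideanSpace.single l 1) := by
    intro k l
    have hc : HasFDerivAt (fun y => pderiv3 l τ y)
        ((ContinuousLinearMap.apply ℝ ℝ (EuclideanSpace.single l 1)).comp
          (fderiv ℝ (fderiv ℝ τ) x)) x := by
      have h := (ContinuousLinearMap.apply ℝ ℝ (EuclideanSpace.single l 1)).hasFDerivAt.comp x
        (hf' x).hasFDerivAt
      exact h
    rw [pderiv3, hc.fderiv]
    rfl
  have hsym : ∀ i j : Fin 3, pderiv3 i (fun y => pderiv3 j τ y) x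
      = pderiv3 j (fun y => pderiv3 i τ y) x := by
    intro i j
    rw [key, key]
    exact second_derivative_symmetric hderiv (hf' x).hasFDerivAt _ _
  funext i
  fin_cases i <;> simp [curl3, hsym]

/-- Lemma 3 of the paper, CSDFT case `N = 1`: for a one-orbital
state whose components have globally well-defined `C¹` phases, the two vector
fields `j/ρ ∓ Im(σ̄∇σ)/(ρρ^↕)` are the gradients `∇τ^↓`, `∇τ^↑`; in particular
they are curl-free when the phases are `C²`. -/
theorem stmt5 (ρu ρd : R3 → ℝ) (hρu : ∀ x, 0 < ρu x) (hρd : ∀ x, 0 < ρd x)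
    (hsu : ContDiff ℝ 1 (fun x => Real.sqrt (ρu x)))
    (hsd : ContDiff ℝ 1 (fun x => Real.sqrt (ρd x)))
    (τu τd : R3 → ℝ) (hτu : ContDiff ℝ 1 τu) (hτd : ContDiff ℝ 1 τd)
    (φu φd : R3 → ℂ)
    (hφu : φu = fun x => (Real.sqrt (ρu x) : ℂ) * Complex.exp (Complex.I * (τu x : ℂ)))
    (hφd : φd = fun x => (Real.sqrt (ρd x) : ℂ) * Complex.exp (Complex.I * (τd x : ℂ)))
    (σ : R3 → ℂ) (hσ : σ = fun x => φu x * conj (φd x))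
    (ρ : R3 → ℝ) (hρ : ρ = fun x => ρu x + ρd x)
    (j : R3 → Fin 3 → ℝ)
    (hj : j = fun x i =>
      (conj (φu x) * cderiv3 i φu x + conj (φd x) * cderiv3 i φd x).im) :
    (∀ x i, j x i / ρ x - (conj (σ x) * cderiv3 i σ x).im / (ρ x * ρd x)
        = pderiv3 i τd x) ∧
    (∀ x i, j x i / ρ x + (conj (σ x) * cderiv3 i σ x).im / (ρ x * ρu x)
        = pderiv3 i τu x) ∧
    (ContDiff ℝ 2 τu → ContDiff ℝ 2 τd →
      (∀ x, curl3 (fun y i =>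
          j y i / ρ y - (conj (σ y) * cderiv3 i σ y).im / (ρ y * ρd y)) x = 0) ∧
      (∀ x, curl3 (fun y i =>
          j y i / ρ y + (conj (σ y) * cderiv3 i σ y).im / (ρ y * ρu y)) x = 0)) := by
  have hsq_u : ∀ x, Real.sqrt (ρu x) ^ 2 = ρu x := fun x => Real.sq_sqrt (hρu x).le
  have hsq_d : ∀ x, Real.sqrt (ρd x) ^ 2 = ρd x := fun x => Real.sq_sqrt (hρd x).le
  have hss : ContDiff ℝ 1 (fun y => Real.sqrt (ρu y) * Real.sqrt (ρd y)) := hsu.mul hsd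
  have hτud : ContDiff ℝ 1 (fun y => τu y - τd y) := hτu.sub hτd
  have hσ' : σ = fun y => ((Real.sqrt (ρu y) * Real.sqrt (ρd y) : ℝ) : ℂ) *
      Complex.exp (Complex.I * ((τu y - τd y : ℝ) : ℂ)) := by
    funext y
    rw [hσ, hφu, hφd]
    simp only [map_mul, Complex.conj_ofReal, ← Complex.exp_conj]
    rw [Complex.conj_I]
    rw [show ((Real.sqrt (ρu y) : ℂ) * Complex.exp (Complex.I * (τu y : ℂ))) *
        ((Real.sqrt (ρd y) : ℂ) * Complex.exp (-Complex.I * (τd y : ℂ)))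
        = ((Real.sqrt (ρu y) : ℂ) * (Real.sqrt (ρd y) : ℂ)) *
          (Complex.exp (Complex.I * (τu y : ℂ)) *
            Complex.exp (-Complex.I * (τd y : ℂ))) from by ring]
    rw [← Complex.exp_add]
    push_cast
    ring_nf
  have hpsub : ∀ x i, pderiv3 i (fun y => τu y - τd y) x
      = pderiv3 i τu x - pderiv3 i τd x := by
    intro x i
    simp [pderiv3, fderiv_fun_sub (hτu.differentiable one_ne_zero x) (hτd.differentiable one_ne_zero x)]
  have hj' : ∀ x i, j x i = ρu x * pderiv3 i τu x + ρd x * pderiv3 i τd x := by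
    intro x i
    rw [hj]
    simp only [hφu, hφd]
    rw [cderiv_polar _ _ hsu hτu, cderiv_polar _ _ hsd hτd, Complex.add_im,
      im_conj_mul, im_conj_mul, hsq_u, hsq_d]
  have hσim : ∀ x i, (conj (σ x) * cderiv3 i σ x).im
      = ρu x * ρd x * (pderiv3 i τu x - pderiv3 i τd x) := by
    intro x i
    simp only [hσ']
    rw [cderiv_polar _ _ hss hτud, im_conj_mul, mul_pow, hsq_u, hsq_d, hpsub]
  have part1 : ∀ x i, j x i / ρ x - (conj (σ x) * cderiv3 i σ x).im / (ρ x * ρd x)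
      = pderiv3 i τd x := by
    intro x i
    rw [hj' x i, hσim x i, hρ]
    have h1 : ρu x + ρd x ≠ 0 := (add_pos (hρu x) (hρd x)).ne'
    have h2 : ρd x ≠ 0 := (hρd x).ne'
    field_simp
    ring
  have part2 : ∀ x i, j x i / ρ x + (conj (σ x) * cderiv3 i σ x).im / (ρ x * ρu x)
      = pderiv3 i τu x := by
    intro x i
    rw [hj' x i, hσim x i, hρ]
    have h1 : ρu x + ρd x ≠ 0 := (add_pos (hρu x) (hρd x)).ne'
    have h2 : ρu x ≠ 0 := (hρu x).ne'
    field_simp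
    ring
  refine ⟨part1, part2, fun hτu2 hτd2 => ⟨?_, ?_⟩⟩
  · intro x
    have e1 : (fun y i => j y i / ρ y - (conj (σ y) * cderiv3 i σ y).im / (ρ y * ρd y))
        = fun y i => pderiv3 i τd y := by
      funext y i; exact part1 y i
    rw [e1]
    exact curl_grad τd hτd2 x
  · intro x
    have e1 : (fun y i => j y i / ρ y + (conj (σ y) * cderiv3 i σ y).im / (ρ y * ρu y))
        = fun y i => pderiv3 i τu y := by
      funext y i; exact part2 y i
    rw [e1]
    exact curl_grad τu hτu2 x
end
end

section
/- Let Φ̃₁, Φ̃₂ ∈ L²(ℝ³,ℂ²) with ‖Φ̃₁‖_{L²} = ‖Φ̃₂‖_{L²} = 1, let u, v : ℝ³ → ℝ be measurable, and suppose ⟨Φ̃₁ | Φ̃₂ e^{iu}⟩ = 0, ⟨Φ̃₁ | Φ̃₁ e^{iv}⟩ = 0, ⟨Φ̃₁ | Φ̃₂ e^{i(u+v)}⟩ = 0, ⟨Φ̃₂ e^{iu} | Φ̃₁ e^{iv}⟩ = 0, and ⟨Φ̃₂ | Φ̃₂ e^{iv}⟩ = 0, where ⟨·|·⟩ is the L²(ℝ³,ℂ²)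 inner product. Let m^↑, m^↓ ≥ 0 with m^↑ + m^↓ = 2, and define Φ₁ := (1/√2)(√(m^↑) Φ̃₁ + √(m^↓) Φ̃₂ e^{iu}) and Φ₂ := (1/√2)(√(m^↑) Φ̃₁ − √(m^↓) Φ̃₂ e^{iu}) e^{iv}. Then {Φ₁, Φ₂} is an L²-orthonormal family and Φ₁(r)Φ₁(r)^* + Φ₂(r)Φ₂(r)^* = m^↑ Φ̃₁(r)Φ̃₁(r)^* + m^↓ Φ̃₂(r)Φ̃₂(r)^* for a.e. r ∈ ℝ³. -/
open MeasureTheory Complex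
open scoped ComplexConjugate

noncomputable section

/-!
Write `A = Φ̃₁`, `B = e^{iu} Φ̃₂`, `a = √(m^↑/2)`, `b = √(m^↓/2)`, so that `Φ₁ = aA + bB` and
`Φ₂ = e^{iv} (aA - bB)`. The hypotheses say that `A, B` are orthonormal and that both are
orthogonal to `e^{iv} A` and `e^{iv} B`. Multiplication by a unimodular phase preserves the
pointwise inner product and the pointwise density `ΦΦ*`, so `‖Φ₁‖² = ‖Φ₂‖² = a² + b² = 1`,
`⟨Φ₁, Φ₂⟩` expands into four vanishing terms, and `Φ₁Φ₁* + Φ₂Φ₂* = 2a² AA* + 2b² BB*` is the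
parallelogram law for rank-one matrices.
-/

theorem conj_exp_I_mul_ofReal_mul_self (r : ℝ) : conj (exp (I * r)) * exp (I * r) = 1 := by
  rw [← exp_conj, ← exp_add]
  simp

section Phase

variable {α ι : Type*}

def withPhase (w : α → ℝ) (f : α → ι → ℂ) : α → ι → ℂ :=
  fun x s => f x s * exp (I * w x)

theorem withPhase_withPhase (u v : α → ℝ) (f : α → ι → ℂ) :
    withPhase v (withPhase u f) = withPhase (u + v) f := by
  ext x s
  simp only [withPhase, Pi.add_apply, ofReal_add, mul_add, exp_add, mul_assoc]

theorem withPhase_smul_add_smul (v : α → ℝ) (a b : ℂ) (A B : α → ι → ℂ) :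
    withPhase v (a • A + b • B) = a • withPhase v A + b • withPhase v B := by
  ext x s
  simp only [withPhase, Pi.add_apply, Pi.smul_apply, smul_eq_mul]
  ring

def spinDensity (f : α → ι → ℂ) (x : α) : Matrix ι ι ℂ :=
  fun i j => f x i * conj (f x j)

theorem spinDensity_withPhase (w : α → ℝ) (f : α → ι → ℂ) :
    spinDensity (withPhase w f) = spinDensity f := by
  ext x i j
  simp only [spinDensity, withPhase, map_mul]
  linear_combination f x i * conj (f x j) * conj_exp_I_mul_ofReal_mul_self (w x)

theorem spinDensity_smul_add_smul_add_withPhase (v : α → ℝ) (a b : ℝ) (A B : α → ι → ℂ)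
    (x : α) :
    spinDensity ((a : ℂ) • A + (b : ℂ) • B) x +
        spinDensity (withPhase v ((a : ℂ) • A + ((-b : ℝ) : ℂ) • B)) x =
      ((2 * a ^ 2 : ℝ) : ℂ) • spinDensity A x + ((2 * b ^ 2 : ℝ) : ℂ) • spinDensity B x := by
  rw [spinDensity_withPhase]
  ext i j
  simp only [spinDensity, Matrix.add_apply, Matrix.smul_apply, Pi.add_apply, Pi.smul_apply,
    smul_eq_mul, map_add, map_mul, conj_ofReal]
  push_cast
  ring

end Phase

section SpinorL2

variable {α ι : Type*} [MeasurableSpace α] {μ : Measure α}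

def MemL2 (μ : Measure α) (f : α → ι → ℂ) : Prop :=
  ∀ s, MemLp (fun x => f x s) 2 μ

theorem MemL2.add {f g : α → ι → ℂ} (hf : MemL2 μ f) (hg : MemL2 μ g) : MemL2 μ (f + g) :=
  fun s => (hf s).add (hg s)

theorem MemL2.const_smul {f : α → ι → ℂ} (hf : MemL2 μ f) (c : ℂ) : MemL2 μ (c • f) :=
  fun s => (hf s).const_mul c

theorem MemL2.withPhase {f : α → ι → ℂ} (hf : MemL2 μ f) {w : α → ℝ} (hw : AEMeasurable w μ) :
    MemL2 μ (withPhase w f) := fun s =>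
  (hf s).of_le
    ((hf s).1.mul (by fun_prop : AEMeasurable (fun x => exp (I * w x)) μ).aestronglyMeasurable)
    (.of_forall fun x => by simp [_root_.withPhase, norm_exp_I_mul_ofReal])

variable [Fintype ι]

def spinorInner (μ : Measure α) (f g : α → ι → ℂ) : ℂ :=
  ∫ x, ∑ s, conj (f x s) * g x s ∂μ

theorem MemL2.integrable_inner {f g : α → ι → ℂ} (hf : MemL2 μ f) (hg : MemL2 μ g) :
    Integrable (fun x => ∑ s, conj (f x s) * g x s) μ :=
  integrable_finsetSum _ fun s _ => (hf s).star.integrable_mul (hg s)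

theorem spinorInner_add_left {f g h : α → ι → ℂ} (hf : MemL2 μ f) (hg : MemL2 μ g)
    (hh : MemL2 μ h) : spinorInner μ (f + g) h = spinorInner μ f h + spinorInner μ g h := by
  rw [spinorInner, spinorInner, spinorInner,
    ← integral_add (hf.integrable_inner hh) (hg.integrable_inner hh)]
  simp only [Pi.add_apply, map_add, add_mul, Finset.sum_add_distrib]

theorem spinorInner_add_right {f g h : α → ι → ℂ} (hf : MemL2 μ f) (hg : MemL2 μ g)
    (hh : MemL2 μ h) : spinorInner μ h (f + g) = spinorInner μ h f + spinorInner μ h g := by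
  rw [spinorInner, spinorInner, spinorInner,
    ← integral_add (hh.integrable_inner hf) (hh.integrable_inner hg)]
  simp only [Pi.add_apply, mul_add, Finset.sum_add_distrib]

theorem spinorInner_smul_left (c : ℂ) (f g : α → ι → ℂ) :
    spinorInner μ (c • f) g = conj c * spinorInner μ f g := by
  rw [spinorInner, spinorInner, ← integral_const_mul]
  simp only [Pi.smul_apply, smul_eq_mul, map_mul, Finset.mul_sum, mul_assoc]

theorem spinorInner_smul_right (c : ℂ) (f g : α → ι → ℂ) :
    spinorInner μ f (c • g) = c * spinorInner μ f g := by
  rw [spinorInner, spinorInner, ← integral_const_mul]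
  simp only [Pi.smul_apply, smul_eq_mul, Finset.mul_sum, mul_left_comm]

theorem spinorInner_conj_symm (f g : α → ι → ℂ) :
    conj (spinorInner μ f g) = spinorInner μ g f := by
  rw [spinorInner, spinorInner, ← integral_conj]
  simp only [map_sum, map_mul, conj_conj, mul_comm]

theorem spinorInner_self (f : α → ι → ℂ) :
    spinorInner μ f f = ((∫ x, ∑ s, normSq (f x s) ∂μ : ℝ) : ℂ) := by
  rw [spinorInner, ← integral_complex_ofReal]
  simp only [ofReal_sum, normSq_eq_conj_mul_self]

theorem spinorInner_withPhase_withPhase (w : α → ℝ) (f g : α → ι → ℂ) :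
    spinorInner μ (withPhase w f) (withPhase w g) = spinorInner μ f g := by
  simp only [spinorInner, withPhase, map_mul]
  congr with x
  refine Finset.sum_congr rfl fun s _ => ?_
  linear_combination conj (f x s) * g x s * conj_exp_I_mul_ofReal_mul_self (w x)

theorem spinorInner_smul_add_smul {A B A' B' : α → ι → ℂ} (hA : MemL2 μ A) (hB : MemL2 μ B)
    (hA' : MemL2 μ A') (hB' : MemL2 μ B') (a b a' b' : ℂ) :
    spinorInner μ (a • A + b • B) (a' • A' + b' • B') =
      conj a * a' * spinorInner μ A A' + conj a * b' * spinorInner μ A B' +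
        conj b * a' * spinorInner μ B A' + conj b * b' * spinorInner μ B B' := by
  rw [spinorInner_add_left (hA.const_smul a) (hB.const_smul b)
      ((hA'.const_smul a').add (hB'.const_smul b')),
    spinorInner_add_right (hA'.const_smul a') (hB'.const_smul b') (hA.const_smul a),
    spinorInner_add_right (hA'.const_smul a') (hB'.const_smul b') (hB.const_smul b)]
  simp only [spinorInner_smul_left, spinorInner_smul_right]
  ring

theorem spinorInner_smul_add_smul_self {A B : α → ι → ℂ} (hA : MemL2 μ A) (hB : MemL2 μ B)
    (hAA : spinorInner μ A A = 1) (hBB : spinorInner μ B B = 1) (hAB : spinorInner μ A B = 0)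
    (a b : ℝ) :
    spinorInner μ ((a : ℂ) • A + (b : ℂ) • B) ((a : ℂ) • A + (b : ℂ) • B) =
      ((a ^ 2 + b ^ 2 : ℝ) : ℂ) := by
  rw [spinorInner_smul_add_smul hA hB hA hB, ← spinorInner_conj_symm A B, hAA, hBB, hAB]
  simp only [conj_ofReal, map_zero]
  push_cast
  ring

theorem spinorInner_smul_add_smul_withPhase_eq_zero {A B : α → ι → ℂ} (hA : MemL2 μ A)
    (hB : MemL2 μ B) {v : α → ℝ} (hv : AEMeasurable v μ)
    (hAA : spinorInner μ A (withPhase v A) = 0) (hAB : spinorInner μ A (withPhase v B) = 0)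
    (hBA : spinorInner μ B (withPhase v A) = 0) (hBB : spinorInner μ B (withPhase v B) = 0)
    (a b a' b' : ℂ) :
    spinorInner μ (a • A + b • B) (withPhase v (a' • A + b' • B)) = 0 := by
  rw [withPhase_smul_add_smul,
    spinorInner_smul_add_smul hA hB (hA.withPhase hv) (hB.withPhase hv), hAA, hAB, hBA, hBB]
  ring

end SpinorL2

/-- the Lazarev–Lieb phase construction producing two
orthonormal orbitals `Φ₁, Φ₂` out of two normalized orbitals `Φ̃₁, Φ̃₂` and
phases `u, v`, with `Φ₁Φ₁* + Φ₂Φ₂* = m^↑ Φ̃₁Φ̃₁* + m^↓ Φ̃₂Φ̃₂*` a.e. -/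
theorem stmt15 (Ψ₁ Ψ₂ : R3 → Fin 2 → ℂ)
    (hΨ₁ : ∀ s, MemLp (fun x => Ψ₁ x s) 2 volume)
    (hΨ₂ : ∀ s, MemLp (fun x => Ψ₂ x s) 2 volume)
    (hn₁ : (∫ x, ∑ s : Fin 2, Complex.normSq (Ψ₁ x s)) = 1)
    (hn₂ : (∫ x, ∑ s : Fin 2, Complex.normSq (Ψ₂ x s)) = 1)
    (u v : R3 → ℝ) (hu : Measurable u) (hv : Measurable v)
    (hip₁ : (∫ x, ∑ s : Fin 2,
      conj (Ψ₁ x s) * (Ψ₂ x s * Complex.exp (Complex.I * (u x : ℂ)))) = 0)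
    (hip₂ : (∫ x, ∑ s : Fin 2,
      conj (Ψ₁ x s) * (Ψ₁ x s * Complex.exp (Complex.I * (v x : ℂ)))) = 0)
    (hip₃ : (∫ x, ∑ s : Fin 2,
      conj (Ψ₁ x s) * (Ψ₂ x s * Complex.exp (Complex.I * ((u x : ℂ) + (v x : ℂ))))) = 0)
    (hip₄ : (∫ x, ∑ s : Fin 2,
      conj (Ψ₂ x s * Complex.exp (Complex.I * (u x : ℂ))) *
        (Ψ₁ x s * Complex.exp (Complex.I * (v x : ℂ)))) = 0)
    (hip₅ : (∫ x, ∑ s : Fin 2,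
      conj (Ψ₂ x s) * (Ψ₂ x s * Complex.exp (Complex.I * (v x : ℂ)))) = 0)
    (mu md : ℝ) (hmu : 0 ≤ mu) (hmd : 0 ≤ md) (hm : mu + md = 2)
    (Φ₁ Φ₂ : R3 → Fin 2 → ℂ)
    (hΦ₁ : Φ₁ = fun x s => ((Real.sqrt 2 : ℝ) : ℂ)⁻¹ *
      (((Real.sqrt mu : ℝ) : ℂ) * Ψ₁ x s +
        ((Real.sqrt md : ℝ) : ℂ) * (Ψ₂ x s * Complex.exp (Complex.I * (u x : ℂ)))))
    (hΦ₂ : Φ₂ = fun x s => ((Real.sqrt 2 : ℝ) : ℂ)⁻¹ *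
      (((Real.sqrt mu : ℝ) : ℂ) * Ψ₁ x s -
        ((Real.sqrt md : ℝ) : ℂ) * (Ψ₂ x s * Complex.exp (Complex.I * (u x : ℂ)))) *
        Complex.exp (Complex.I * (v x : ℂ))) :
    (∫ x, ∑ s : Fin 2, conj (Φ₁ x s) * Φ₁ x s) = 1 ∧
    (∫ x, ∑ s : Fin 2, conj (Φ₂ x s) * Φ₂ x s) = 1 ∧
    (∫ x, ∑ s : Fin 2, conj (Φ₁ x s) * Φ₂ x s) = 0 ∧
    (∀ᵐ x ∂(volume : Measure R3), ∀ a b : Fin 2,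
      Φ₁ x a * conj (Φ₁ x b) + Φ₂ x a * conj (Φ₂ x b) =
        (mu : ℂ) * (Ψ₁ x a * conj (Ψ₁ x b)) + (md : ℂ) * (Ψ₂ x a * conj (Ψ₂ x b))) := by
  set a : ℝ := √mu / √2
  set b : ℝ := √md / √2
  have ha : 2 * a ^ 2 = mu := by rw [div_pow, Real.sq_sqrt hmu, Real.sq_sqrt zero_le_two]; ring
  have hb : 2 * b ^ 2 = md := by rw [div_pow, Real.sq_sqrt hmd, Real.sq_sqrt zero_le_two]; ring
  have hab : a ^ 2 + b ^ 2 = 1 := by linarith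
  have hΦ₁' : Φ₁ = (a : ℂ) • Ψ₁ + (b : ℂ) • withPhase u Ψ₂ := by
    ext x s; simp only [hΦ₁, a, b, withPhase, Pi.add_apply, Pi.smul_apply, smul_eq_mul]
    push_cast; ring
  have hΦ₂' : Φ₂ = withPhase v ((a : ℂ) • Ψ₁ + ((-b : ℝ) : ℂ) • withPhase u Ψ₂) := by
    ext x s; simp only [hΦ₂, a, b, withPhase, Pi.add_apply, Pi.smul_apply, smul_eq_mul]
    push_cast; ring
  have hB : MemL2 volume (withPhase u Ψ₂) := MemL2.withPhase hΨ₂ hu.aemeasurable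
  have hAA : spinorInner volume Ψ₁ Ψ₁ = 1 := by rw [spinorInner_self, hn₁, ofReal_one]
  have hBB : spinorInner volume (withPhase u Ψ₂) (withPhase u Ψ₂) = 1 := by
    rw [spinorInner_withPhase_withPhase, spinorInner_self, hn₂, ofReal_one]
  have hABv : spinorInner volume Ψ₁ (withPhase v (withPhase u Ψ₂)) = 0 := by
    rw [withPhase_withPhase]
    simpa only [spinorInner, withPhase, Pi.add_apply, ofReal_add] using hip₃
  have hBBv : spinorInner volume (withPhase u Ψ₂) (withPhase v (withPhase u Ψ₂)) = 0 := by
    rw [withPhase_withPhase, add_comm, ← withPhase_withPhase, spinorInner_withPhase_withPhase]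
    exact hip₅
  refine ⟨(?_ : spinorInner volume Φ₁ Φ₁ = 1), (?_ : spinorInner volume Φ₂ Φ₂ = 1),
    (?_ : spinorInner volume Φ₁ Φ₂ = 0), .of_forall fun x i j => ?_⟩
  · rw [hΦ₁', spinorInner_smul_add_smul_self hΨ₁ hB hAA hBB hip₁, hab, ofReal_one]
  · rw [hΦ₂', spinorInner_withPhase_withPhase,
      spinorInner_smul_add_smul_self hΨ₁ hB hAA hBB hip₁, neg_sq, hab, ofReal_one]
  · rw [hΦ₁', hΦ₂']
    exact spinorInner_smul_add_smul_withPhase_eq_zero hΨ₁ hB hv.aemeasurable hip₂ hABv hip₄ hBBv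
      _ _ _ _
  · have h := spinDensity_smul_add_smul_add_withPhase v a b Ψ₁ (withPhase u Ψ₂) x
    rw [ha, hb, spinDensity_withPhase u Ψ₂, ← hΦ₁', ← hΦ₂'] at h
    exact congrFun₂ h i j
end
end

section
/- Let ρ ∈ L¹(ℝ³) with ρ ≥ 0 a.e. and ∫_{ℝ³} ρ = N for an integer N ≥ 4, and let ξ : ℝ → (0,1) be continuous, strictly increasing, with lim_{x→−∞} ξ(x) = 0 and lim_{x→+∞} ξ(x) = 1. Then there exist α, β, γ ∈ ℝ such that, setting η₁(r) := (2/N) ξ(r₁ + α), η₂(r) := (2/(N−1)) ξ(r₁ + β)(1 − η₁(r)), and η₃(r) := (2/(N−2)) ξ(r₂ + γ)(1 − η₁(r) − η₂(r)), one has ∫_{ℝ³} η₁ ρ = ∫_{ℝ³} η₂ ρ = ∫_{ℝ³} η₃ ρ = 1; consequently, with η_k := (1/(N−3))(1 − η₁ − η₂ − η₃) for 4 ≤ k ≤ N, one has ∫_{ℝ³} η_k ρ = 1 for every 1 ≤ k ≤ N. -/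
open MeasureTheory Filter

noncomputable section

/-!
By dominated convergence, `α ↦ ∫ ξ (ℓ x + α) * g x` is continuous and runs from `0`
(as `α → -∞`) to `∫ g` (as `α → +∞`), so by the intermediate value theorem it takes the value
`(∫ g) / 2`. Applied in turn to `g = ρ`, `(1 - η₁) ρ`, `(1 - η₁ - η₂) ρ`, of masses `N`, `N - 1`,
`N - 2`, this gives `η₁, η₂, η₃` of unit mass, and `(1 - η₁ - η₂ - η₃) ρ` is left with mass `N - 3`.
-/

section ShiftedMass

variable {E : Type*} {ξ : ℝ → ℝ} {ℓ g : E → ℝ} {C : ℝ}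

theorem norm_shift_mul_le (hξb : ∀ t, ‖ξ t‖ ≤ C) (x : E) (α : ℝ) :
    ‖ξ (ℓ x + α) * g x‖ ≤ C * ‖g x‖ := by
  rw [norm_mul]
  exact mul_le_mul_of_nonneg_right (hξb _) (norm_nonneg _)

variable [MeasurableSpace E] {μ : Measure E}

def shiftedMass (μ : Measure E) (ξ : ℝ → ℝ) (ℓ g : E → ℝ) (α : ℝ) : ℝ :=
  ∫ x, ξ (ℓ x + α) * g x ∂μ

theorem aestronglyMeasurable_shift_mul (hξ : Continuous ξ) (hℓ : Measurable ℓ)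
    (hg : AEStronglyMeasurable g μ) (α : ℝ) :
    AEStronglyMeasurable (fun x => ξ (ℓ x + α) * g x) μ :=
  ((hξ.measurable.comp (hℓ.add_const α)).aestronglyMeasurable).mul hg

theorem integrable_shift_mul (hξ : Continuous ξ) (hℓ : Measurable ℓ) (hξb : ∀ t, ‖ξ t‖ ≤ C)
    (hg : Integrable g μ) (α : ℝ) : Integrable (fun x => ξ (ℓ x + α) * g x) μ :=
  hg.bdd_mul ((hξ.measurable.comp (hℓ.add_const α)).aestronglyMeasurable)
    (Eventually.of_forall fun _ => hξb _)

theorem continuous_shiftedMass (hξ : Continuous ξ) (hℓ : Measurable ℓ) (hξb : ∀ t, ‖ξ t‖ ≤ C)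
    (hg : Integrable g μ) : Continuous (shiftedMass μ ξ ℓ g) :=
  continuous_of_dominated (aestronglyMeasurable_shift_mul hξ hℓ hg.1)
    (fun α => Eventually.of_forall fun x => norm_shift_mul_le hξb x α) (hg.norm.const_mul C)
    (Eventually.of_forall fun x => (hξ.comp (continuous_const_add (ℓ x))).mul continuous_const)

theorem tendsto_shiftedMass {l : Filter ℝ} [l.IsCountablyGenerated] {L : ℝ} (hξ : Continuous ξ)
    (hℓ : Measurable ℓ) (hξb : ∀ t, ‖ξ t‖ ≤ C) (hg : Integrable g μ)
    (hξl : ∀ x, Tendsto (fun α => ξ (ℓ x + α)) l (nhds L)) :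
    Tendsto (shiftedMass μ ξ ℓ g) l (nhds (L * ∫ x, g x ∂μ)) := by
  rw [← integral_const_mul]
  exact tendsto_integral_filter_of_dominated_convergence _
    (Eventually.of_forall (aestronglyMeasurable_shift_mul hξ hℓ hg.1))
    (Eventually.of_forall fun α => Eventually.of_forall fun x => norm_shift_mul_le hξb x α)
    (hg.norm.const_mul C) (Eventually.of_forall fun x => (hξl x).mul_const (g x))

theorem exists_shiftedMass_eq (hξ : Continuous ξ) (hℓ : Measurable ℓ) (hξb : ∀ t, ‖ξ t‖ ≤ C)
    (hbot : Tendsto ξ atBot (nhds 0)) (htop : Tendsto ξ atTop (nhds 1)) (hg : Integrable g μ)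
    {c : ℝ} (hc : c ∈ Set.Ioo 0 (∫ x, g x ∂μ)) : ∃ α, shiftedMass μ ξ ℓ g α = c := by
  have hlim_bot : Tendsto (shiftedMass μ ξ ℓ g) atBot (nhds (0 * ∫ x, g x ∂μ)) :=
    tendsto_shiftedMass hξ hℓ hξb hg fun x =>
      hbot.comp (tendsto_atBot_add_const_left atBot (ℓ x) tendsto_id)
  have hlim_top : Tendsto (shiftedMass μ ξ ℓ g) atTop (nhds (1 * ∫ x, g x ∂μ)) :=
    tendsto_shiftedMass hξ hℓ hξb hg fun x =>
      htop.comp (tendsto_atTop_add_const_left atTop (ℓ x) tendsto_id)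
  rw [zero_mul] at hlim_bot
  rw [one_mul] at hlim_top
  exact mem_range_of_exists_le_of_exists_ge (continuous_shiftedMass hξ hℓ hξb hg)
    ((hlim_bot.eventually_le_const hc.1).exists) ((hlim_top.eventually_const_le hc.2).exists)

theorem exists_shift_integral_eq_one (hξ : Continuous ξ) (hℓ : Measurable ℓ)
    (hξb : ∀ t, ‖ξ t‖ ≤ C) (hbot : Tendsto ξ atBot (nhds 0)) (htop : Tendsto ξ atTop (nhds 1))
    {w ρ : E → ℝ} {m : ℝ} (hwρ : Integrable (fun x => w x * ρ x) μ)
    (hm : ∫ x, w x * ρ x ∂μ = m) (hm0 : 0 < m) :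
    ∃ α, ∫ x, 2 / m * ξ (ℓ x + α) * w x * ρ x ∂μ = 1 ∧
      Integrable (fun x => (w x - 2 / m * ξ (ℓ x + α) * w x) * ρ x) μ ∧
      ∫ x, (w x - 2 / m * ξ (ℓ x + α) * w x) * ρ x ∂μ = m - 1 := by
  obtain ⟨α, hα⟩ := exists_shiftedMass_eq hξ hℓ hξb hbot htop hwρ (c := m / 2)
    ⟨by positivity, by linarith⟩
  have hηρ : Integrable (fun x => 2 / m * ξ (ℓ x + α) * w x * ρ x) μ := by
    simpa only [mul_assoc] using (integrable_shift_mul hξ hℓ hξb hwρ α).const_mul (2 / m)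
  have hmass : ∫ x, 2 / m * ξ (ℓ x + α) * w x * ρ x ∂μ = 1 := by
    simp only [mul_assoc]
    rw [integral_const_mul]
    change 2 / m * shiftedMass μ ξ ℓ (fun x => w x * ρ x) α = 1
    rw [hα]
    field_simp
  refine ⟨α, hmass, by simpa only [sub_mul, Pi.sub_def] using hwρ.sub hηρ, ?_⟩
  simp only [sub_mul]
  rw [integral_sub hwρ hηρ, hm, hmass]

end ShiftedMass

theorem stmt17_general (N : ℕ) (hN : 4 ≤ N) (ρ : R3 → ℝ)
    (hρi : Integrable ρ volume)
    (hρN : (∫ x, ρ x) = (N : ℝ))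
    (ξ : ℝ → ℝ) (hξc : Continuous ξ)
    (hξ01 : ∀ t, ξ t ∈ Set.Ioo (0 : ℝ) 1)
    (hbot : Tendsto ξ atBot (nhds 0)) (htop : Tendsto ξ atTop (nhds 1)) :
    ∃ α β γ : ℝ, ∃ η₁ η₂ η₃ : R3 → ℝ,
      η₁ = (fun x => 2 / (N : ℝ) * ξ (x 0 + α)) ∧
      η₂ = (fun x => 2 / ((N : ℝ) - 1) * ξ (x 0 + β) * (1 - η₁ x)) ∧
      η₃ = (fun x => 2 / ((N : ℝ) - 2) * ξ (x 1 + γ) * (1 - η₁ x - η₂ x)) ∧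
      (∫ x, η₁ x * ρ x) = 1 ∧ (∫ x, η₂ x * ρ x) = 1 ∧ (∫ x, η₃ x * ρ x) = 1 ∧
      (∫ x, 1 / ((N : ℝ) - 3) * (1 - η₁ x - η₂ x - η₃ x) * ρ x) = 1 := by
  have hN4 : (4 : ℝ) ≤ N := by exact_mod_cast hN
  have hξb : ∀ t, ‖ξ t‖ ≤ 1 := fun t => by
    rw [Real.norm_eq_abs, abs_of_pos (hξ01 t).1]
    exact (hξ01 t).2.le
  have hcoord : ∀ i : Fin 3, Measurable fun x : R3 => x i := fun i => by fun_prop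
  obtain ⟨α, h₁, hi₁, hm₁⟩ := exists_shift_integral_eq_one hξc (hcoord 0) hξb hbot htop
    (w := fun _ => 1) (by simpa using hρi) (by simpa using hρN) (by linarith)
  simp only [mul_one] at h₁ hi₁ hm₁
  obtain ⟨β, h₂, hi₂, hm₂⟩ := exists_shift_integral_eq_one hξc (hcoord 0) hξb hbot htop
    hi₁ hm₁ (by linarith)
  obtain ⟨γ, h₃, -, hm₃⟩ := exists_shift_integral_eq_one hξc (hcoord 1) hξb hbot htop
    hi₂ (by rw [hm₂]; ring) (by linarith : (0 : ℝ) < N - 2)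
  refine ⟨α, β, γ, _, _, _, rfl, rfl, rfl, h₁, h₂, h₃, ?_⟩
  simp only [mul_assoc] at hm₃ ⊢
  rw [integral_const_mul, hm₃, show (N : ℝ) - 2 - 1 = N - 3 by ring, one_div_mul_cancel]
  linarith

/-- normalization of the partition of unity. Given a density
`ρ ≥ 0` of total mass `N ≥ 4` and a continuous strictly increasing sigmoid
`ξ : ℝ → (0,1)`, the shifts `α, β, γ` can be tuned so that each `η_k ρ`
(`1 ≤ k ≤ N`) carries unit mass. -/
theorem stmt17 (N : ℕ) (hN : 4 ≤ N) (ρ : R3 → ℝ)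
    (hρi : Integrable ρ volume)
    (hρ0 : ∀ᵐ x ∂(volume : Measure R3), 0 ≤ ρ x)
    (hρN : (∫ x, ρ x) = (N : ℝ))
    (ξ : ℝ → ℝ) (hξc : Continuous ξ) (hξm : StrictMono ξ)
    (hξ01 : ∀ t, ξ t ∈ Set.Ioo (0 : ℝ) 1)
    (hbot : Tendsto ξ atBot (nhds 0)) (htop : Tendsto ξ atTop (nhds 1)) :
    ∃ α β γ : ℝ, ∃ η₁ η₂ η₃ : R3 → ℝ,
      η₁ = (fun x => 2 / (N : ℝ) * ξ (x 0 + α)) ∧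
      η₂ = (fun x => 2 / ((N : ℝ) - 1) * ξ (x 0 + β) * (1 - η₁ x)) ∧
      η₃ = (fun x => 2 / ((N : ℝ) - 2) * ξ (x 1 + γ) * (1 - η₁ x - η₂ x)) ∧
      (∫ x, η₁ x * ρ x) = 1 ∧ (∫ x, η₂ x * ρ x) = 1 ∧ (∫ x, η₃ x * ρ x) = 1 ∧
      (∫ x, 1 / ((N : ℝ) - 3) * (1 - η₁ x - η₂ x - η₃ x) * ρ x) = 1 :=
  stmt17_general N hN ρ hρi hρN ξ hξc hξ01 hbot htop
end
end
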